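/- Let k be an odd integer and s ∈ (0, π). Then ∑_{n=0}^∞ e^{i2ns}/((2n−k−2)(2n−k)(2n−k+2)) = χ_{(−∞,−1]}(k)/(k(4−k²)) − e^{iks}·[ ∑_{n=0}^{(|k|−1)/2} e^{−i·sgn(k)·(2n+1)s}/((2n−1)(2n+1)(2n+3)) + (1/4)·cos(s) + (iπ/8)·sin²(s) + (1/4)·sin²(s)·ln(cot(s/2)) ], where χ_{(−∞,−1]}(k) equals 1 if k ≤ −1 and 0 if k > −1, and sgn(k) = k/|k|. -/

import Mathlib

open Complex Filter Topology



lemma hasSum_oddAtanh {w : ℂ} (hw : ‖w‖ < 1) :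
    HasSum (fun n : ℕ => w ^ (2*n+1) / (2*(n:ℂ)+1))
      ((Complex.log (1+w) - Complex.log (1-w)) / 2) := by
  have h1 := Complex.hasSum_taylorSeries_log hw
  have h2 := Complex.hasSum_taylorSeries_neg_log hw
  have h3 := (h2.add h1).div_const 2
  set g : ℕ → ℂ := fun n => (w ^ n / n + (-1) ^ (n+1) * w ^ n / n) / 2 with hg
  have hinj : Function.Injective (fun n : ℕ => 2*n+1) := fun a b h => by simp only [] at h; omega
  have h0 : ∀ x ∉ Set.range (fun n : ℕ => 2*n+1), g x = 0 := by
    intro x hx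
    have hx' : Even x := by
      rcases Nat.even_or_odd x with h | ⟨m, hm⟩
      · exact h
      · exact absurd ⟨m, by simp only []; omega⟩ hx
    have : (-1 : ℂ) ^ (x+1) = -1 := Odd.neg_one_pow (by exact hx'.add_one)
    simp [hg, this]
    ring
  have h4 : HasSum (g ∘ fun n : ℕ => 2*n+1) ((-Complex.log (1-w) + Complex.log (1+w)) / 2) :=
    (hinj.hasSum_iff h0).2 h3
  have h5 : (g ∘ fun n : ℕ => 2*n+1) = fun n : ℕ => w ^ (2*n+1) / (2*(n:ℂ)+1) := by
    funext n
    have : (-1 : ℂ) ^ (2*n+1+1) = 1 := by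
      rw [show 2*n+1+1 = 2*(n+1) by ring, pow_mul]; norm_num
    simp only [Function.comp, hg, this, one_mul]
    push_cast
    ring
  rw [h5] at h4
  convert h4 using 2
  ring


lemma den1_ne (n : ℕ) : (2*(n:ℂ) - 1) ≠ 0 := by
  have : ((2*(n:ℤ) - 1 : ℤ) : ℂ) ≠ 0 := Int.cast_ne_zero.2 (by omega)
  push_cast at this; convert this using 1
lemma den2_ne (n : ℕ) : (2*(n:ℂ) + 1) ≠ 0 := by
  have : ((2*(n:ℤ) + 1 : ℤ) : ℂ) ≠ 0 := Int.cast_ne_zero.2 (by omega)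
  push_cast at this; convert this using 1
lemma den3_ne (n : ℕ) : (2*(n:ℂ) + 3) ≠ 0 := by
  have : ((2*(n:ℤ) + 3 : ℤ) : ℂ) ≠ 0 := Int.cast_ne_zero.2 (by omega)
  push_cast at this; convert this using 1


noncomputable def Fcf (w : ℂ) : ℂ :=
  ((Complex.log (1+w) - Complex.log (1-w)) / 2 * (w - w⁻¹)^2 - (w + w⁻¹)) / 8

lemma hasSum_cubic_of_lt_one {w : ℂ} (hw : ‖w‖ < 1) (hw0 : w ≠ 0) :
    HasSum (fun n : ℕ => w ^ (2*n+1) / ((2*(n:ℂ)-1) * (2*(n:ℂ)+1) * (2*(n:ℂ)+3)))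
      (Fcf w) := by
  set L := (Complex.log (1+w) - Complex.log (1-w)) / 2 with hL
  have h : HasSum (fun n : ℕ => w ^ (2*n+1) / (2*(n:ℂ)+1)) L := hasSum_oddAtanh hw
  have ha : HasSum (fun n : ℕ => w ^ (2*n+1) / (2*(n:ℂ)-1)) (w^2 * L - w) := by
    have h2 := h.mul_left (w^2)
    have h3 : (fun n : ℕ => w^2 * (w ^ (2*n+1) / (2*(n:ℂ)+1)))
        = fun n : ℕ => w ^ (2*(n+1)+1) / (2*((n+1:ℕ):ℂ)-1) := by
      funext n; push_cast
      rw [mul_div_assoc',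
        div_eq_div_iff (den2_ne n) (by intro hh; exact den2_ne n (by linear_combination hh)),
        show 2*(n+1)+1 = (2*n+1)+2 by ring, pow_add]
      ring
    rw [h3] at h2
    have h5 := (hasSum_nat_add_iff (f := fun n : ℕ => w ^ (2*n+1) / (2*(n:ℂ)-1)) 1).1 h2
    convert h5 using 1
    · rfl
    simp only [Finset.sum_range_one, Nat.cast_zero]
    ring
  have hc : HasSum (fun n : ℕ => w ^ (2*n+1) / (2*(n:ℂ)+3)) ((L - w) / w^2) := by
    have h2 : HasSum (fun n : ℕ => w ^ (2*(n+1)+1) / (2*((n+1:ℕ):ℂ)+1)) (L - w) := by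
      have := (hasSum_nat_add_iff' (f := fun n : ℕ => w ^ (2*n+1) / (2*(n:ℂ)+1)) 1).2 h
      simpa using this
    have h3 := h2.div_const (w^2)
    convert h3 using 2 with n
    · rfl
    push_cast
    rw [div_div, div_eq_div_iff (den3_ne n)
      (mul_ne_zero (by intro hh; exact den3_ne n (by push_cast; linear_combination hh))
        (pow_ne_zero 2 hw0))]
    rw [show 2*(n+1)+1 = (2*n+1)+2 by ring, pow_add]
    ring
  have hcomb := ((ha.sub (h.mul_left 2)).add hc).div_const 8
  have hfun : (fun i : ℕ => (w ^ (2*i+1) / (2*(i:ℂ)-1) - 2 * (w ^ (2*i+1) / (2*(i:ℂ)+1))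
        + w ^ (2*i+1) / (2*(i:ℂ)+3)) / 8)
      = fun n : ℕ => w ^ (2*n+1) / ((2*(n:ℂ)-1) * (2*(n:ℂ)+1) * (2*(n:ℂ)+3)) := by
    funext n
    have d1 := den1_ne n; have d2 := den2_ne n; have d3 := den3_ne n
    field_simp
    ring
  have hval : (w ^ 2 * L - w - 2 * L + (L - w) / w ^ 2) / 8 = Fcf w := by
    simp only [Fcf, ← hL]
    field_simp
    ring
  rw [hfun, hval] at hcomb
  exact hcomb



lemma log_polar {r θ : ℝ} (hr : 0 < r) (h1 : -Real.pi < θ) (h2 : θ ≤ Real.pi) :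
    Complex.log ((r:ℂ) * Complex.exp ((θ:ℂ)*Complex.I))
      = (Real.log r : ℂ) + (θ:ℂ)*Complex.I := by
  have : (r:ℂ) * Complex.exp ((θ:ℂ)*Complex.I)
      = Complex.exp ((Real.log r : ℂ) + (θ:ℂ)*Complex.I) := by
    rw [Complex.exp_add, ← Complex.ofReal_exp, Real.exp_log hr]
  rw [this, Complex.log_exp] <;> simp [h1, h2]

lemma one_add_exp (s : ℝ) :
    (1 : ℂ) + Complex.exp ((s:ℂ)*Complex.I)
      = ((2*Real.cos (s/2) : ℝ):ℂ) * Complex.exp (((s/2 : ℝ):ℂ)*Complex.I) := by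
  have key : ∀ x : ℂ, 1 + Complex.cos (2*x) + Complex.sin (2*x) * Complex.I
      = 2*Complex.cos x * (Complex.cos x + Complex.sin x * Complex.I) := by
    intro x
    rw [Complex.cos_two_mul, Complex.sin_two_mul]
    ring
  have h := key ((s:ℂ)/2)
  rw [show (2:ℂ)*((s:ℂ)/2) = (s:ℂ) by ring] at h
  rw [Complex.exp_mul_I, Complex.exp_mul_I]
  push_cast
  linear_combination h
lemma one_sub_exp (s : ℝ) :
    (1 : ℂ) - Complex.exp ((s:ℂ)*Complex.I)
      = ((2*Real.sin (s/2) : ℝ):ℂ) * Complex.exp (((s/2 - Real.pi/2 : ℝ):ℂ)*Complex.I) := by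
  have key : ∀ x : ℂ, 1 - Complex.cos (2*x) - Complex.sin (2*x) * Complex.I
      = 2*Complex.sin x * (Complex.cos (x - Real.pi/2) + Complex.sin (x - Real.pi/2) * Complex.I) := by
    intro x
    rw [show x - (Real.pi:ℂ)/2 = -((Real.pi:ℂ)/2 - x) by ring,
      Complex.cos_neg, Complex.sin_neg, Complex.cos_pi_div_two_sub, Complex.sin_pi_div_two_sub,
      Complex.cos_two_mul, Complex.sin_two_mul]
    linear_combination (-2 : ℂ) * (Complex.sin_sq_add_cos_sq x)
  have h := key ((s:ℂ)/2)
  rw [show (2:ℂ)*((s:ℂ)/2) = (s:ℂ) by ring] at h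
  rw [Complex.exp_mul_I, Complex.exp_mul_I]
  push_cast
  push_cast at h
  linear_combination h

lemma Fcf_val {s : ℝ} (hs : s ∈ Set.Ioo 0 Real.pi) :
    Fcf (Complex.exp ((s:ℂ)*Complex.I))
      = -((1 / 4 : ℂ) * (Real.cos s : ℂ)
            + Complex.I * (Real.pi : ℂ) / 8 * (Real.sin s : ℂ) ^ 2
            + (1 / 4 : ℂ) * (Real.sin s : ℂ) ^ 2 * (Real.log (Real.cot (s / 2)) : ℂ)) := by
  obtain ⟨hs0, hsπ⟩ := hs
  have hc : 0 < Real.cos (s/2) := Real.cos_pos_of_mem_Ioo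
    ⟨by linarith [Real.pi_pos], by linarith⟩
  have hsin : 0 < Real.sin (s/2) := Real.sin_pos_of_pos_of_lt_pi (by linarith)
    (by linarith [Real.pi_pos])
  have hl1 : Complex.log (1 + Complex.exp ((s:ℂ)*Complex.I))
      = (Real.log (2*Real.cos (s/2)) : ℂ) + ((s/2 : ℝ):ℂ)*Complex.I := by
    rw [one_add_exp s, log_polar (by positivity) (by linarith [Real.pi_pos]) (by linarith)]
  have hl2 : Complex.log (1 - Complex.exp ((s:ℂ)*Complex.I))
      = (Real.log (2*Real.sin (s/2)) : ℂ) + ((s/2 - Real.pi/2 : ℝ):ℂ)*Complex.I := by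
    rw [one_sub_exp s, log_polar (by positivity) (by linarith [Real.pi_pos]) (by linarith [Real.pi_pos])]
  have hlogdiff : Real.log (2*Real.cos (s/2)) - Real.log (2*Real.sin (s/2))
      = Real.log (Real.cot (s/2)) := by
    rw [← Real.log_div (by positivity) (by positivity), Real.cot_eq_cos_div_sin]
    congr 1
    field_simp
  have hinv : (Complex.exp ((s:ℂ)*Complex.I))⁻¹ = Complex.exp (-(s:ℂ)*Complex.I) := by
    rw [← Complex.exp_neg]
    congr 1
    ring
  have hdiff : Complex.exp ((s:ℂ)*Complex.I) - (Complex.exp ((s:ℂ)*Complex.I))⁻¹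
      = 2*(Real.sin s : ℂ)*Complex.I := by
    rw [hinv, Complex.exp_mul_I, Complex.exp_mul_I, Complex.cos_neg, Complex.sin_neg,
      ← Complex.ofReal_sin]
    ring
  have hadd : Complex.exp ((s:ℂ)*Complex.I) + (Complex.exp ((s:ℂ)*Complex.I))⁻¹
      = 2*(Real.cos s : ℂ) := by
    rw [hinv, Complex.exp_mul_I, Complex.exp_mul_I, Complex.cos_neg, Complex.sin_neg,
      ← Complex.ofReal_cos]
    ring
  rw [Fcf, hl1, hl2, hdiff, hadd, ← hlogdiff]
  simp only [Complex.ofReal_sub, Complex.ofReal_div, Complex.ofReal_ofNat]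
  linear_combination (((Real.log (2*Real.cos (s/2)) : ℂ) - (Real.log (2*Real.sin (s/2)) : ℂ))
      * ((Real.sin s : ℂ))^2/4
    + Complex.I*(Real.pi : ℂ)*((Real.sin s : ℂ))^2/8) * Complex.I_sq



lemma den_norm_ge (n : ℕ) :
    ((n:ℝ)+1)^2 ≤ ‖(2*(n:ℂ)-1) * (2*(n:ℂ)+1) * (2*(n:ℂ)+3)‖ := by
  rw [norm_mul, norm_mul]
  have e1 : (2*(n:ℂ)-1) = ((2*(n:ℝ)-1 : ℝ):ℂ) := by push_cast; ring
  have e2 : (2*(n:ℂ)+1) = ((2*(n:ℝ)+1 : ℝ):ℂ) := by push_cast; ring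
  have e3 : (2*(n:ℂ)+3) = ((2*(n:ℝ)+3 : ℝ):ℂ) := by push_cast; ring
  rw [e1, e2, e3, Complex.norm_real, Complex.norm_real, Complex.norm_real]
  have h1 : (1:ℝ) ≤ |2*(n:ℝ)-1| := by
    rcases Nat.eq_zero_or_pos n with h | h
    · subst h; norm_num
    · have : (1:ℝ) ≤ (n:ℝ) := by exact_mod_cast h
      rw [_root_.abs_of_nonneg (by linarith)]; linarith
  have h2 : ((n:ℝ)+1) ≤ |2*(n:ℝ)+1| := by
    rw [_root_.abs_of_nonneg (by positivity)]; linarith [Nat.cast_nonneg (α := ℝ) n]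
  have h3 : ((n:ℝ)+1) ≤ |2*(n:ℝ)+3| := by
    rw [_root_.abs_of_nonneg (by positivity)]; linarith [Nat.cast_nonneg (α := ℝ) n]
  have hn0 : (0:ℝ) ≤ (n:ℝ)+1 := by positivity
  calc ((n:ℝ)+1)^2 = 1 * (((n:ℝ)+1) * ((n:ℝ)+1)) := by ring
    _ ≤ |2*(n:ℝ)-1| * (|2*(n:ℝ)+1| * |2*(n:ℝ)+3|) := by
        apply mul_le_mul h1 (mul_le_mul h2 h3 hn0 (abs_nonneg _)) (by positivity) (abs_nonneg _)
    _ = |2*(n:ℝ)-1| * |2*(n:ℝ)+1| * |2*(n:ℝ)+3| := by ring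

lemma summable_bound : Summable (fun n : ℕ => 1/((n:ℝ)+1)^2) := by
  have h := (Real.summable_one_div_nat_pow (p := 2)).mpr one_lt_two
  have := (summable_nat_add_iff (f := fun n : ℕ => 1/(n:ℝ)^2) 1).2 h
  refine this.congr fun n => ?_
  push_cast
  ring_nf

lemma hasSum_S {s : ℝ} (hs : s ∈ Set.Ioo 0 Real.pi) :
    HasSum (fun n : ℕ => Complex.exp ((s:ℂ)*Complex.I) ^ (2*n+1)
        / ((2*(n:ℂ)-1) * (2*(n:ℂ)+1) * (2*(n:ℂ)+3)))
      (Fcf (Complex.exp ((s:ℂ)*Complex.I))) := by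
  obtain ⟨hs0, hsπ⟩ := hs
  set w₀ := Complex.exp ((s:ℂ)*Complex.I) with hw₀
  have hw0ne : w₀ ≠ 0 := Complex.exp_ne_zero _
  have hnorm : ‖w₀‖ = 1 := by
    rw [hw₀, Complex.norm_exp_ofReal_mul_I]
  set D : ℕ → ℂ := fun n => (2*(n:ℂ)-1) * (2*(n:ℂ)+1) * (2*(n:ℂ)+3) with hD
  have hDne : ∀ n, D n ≠ 0 := fun n =>
    mul_ne_zero (mul_ne_zero (den1_ne n) (den2_ne n)) (den3_ne n)
  set g : ℕ → ℂ := fun n => w₀ ^ (2*n+1) / D n with hg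
  have hgbound : ∀ n, ‖g n‖ ≤ 1/((n:ℝ)+1)^2 := by
    intro n
    rw [hg]
    simp only [norm_div, norm_pow, hnorm, one_pow]
    exact one_div_le_one_div_of_le (by positivity) (den_norm_ge n)
  have hg_sum : Summable g := Summable.of_norm_bounded summable_bound hgbound
  set f : ℝ → ℕ → ℂ := fun r n => ((r:ℂ)*w₀) ^ (2*n+1) / D n with hf
  have hA : Filter.Tendsto (fun r => ∑' n, f r n) (nhdsWithin 1 (Set.Iio 1))
      (nhds (∑' n, g n)) := by
    apply tendsto_tsum_of_dominated_convergence summable_bound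
    · intro n
      apply Filter.Tendsto.mono_left _ nhdsWithin_le_nhds
      have hcont : Continuous (fun r : ℝ => ((r:ℂ)*w₀) ^ (2*n+1) / D n) := by
        apply Continuous.div_const
        exact (Complex.continuous_ofReal.mul continuous_const).pow _
      have h := (hcont.continuousAt (x := (1:ℝ))).tendsto
      simp only [Complex.ofReal_one, one_mul] at h
      exact h
    · filter_upwards [Ioo_mem_nhdsLT_of_mem (show (1:ℝ) ∈ Set.Ioc 0 1 by norm_num)]
        with r hr n
      rw [hf]
      simp only [norm_div, norm_pow, norm_mul, hnorm, mul_one, Complex.norm_real]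
      have h1 : ‖r‖ ^ (2*n+1) ≤ 1 := pow_le_one₀ (norm_nonneg r)
        (by rw [Real.norm_eq_abs, _root_.abs_of_nonneg hr.1.le]; exact hr.2.le)
      exact div_le_div₀ zero_le_one h1 (by positivity) (den_norm_ge n)
  have hB : ∀ᶠ r in (nhdsWithin (1:ℝ) (Set.Iio 1)), (∑' n, f r n) = Fcf ((r:ℂ)*w₀) := by
    filter_upwards [Ioo_mem_nhdsLT_of_mem (show (1:ℝ) ∈ Set.Ioc 0 1 by norm_num)]
      with r hr
    have hlt : ‖(r:ℂ)*w₀‖ < 1 := by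
      rw [norm_mul, hnorm, mul_one, Complex.norm_real, Real.norm_eq_abs,
        _root_.abs_of_nonneg hr.1.le]
      exact hr.2
    have hne : (r:ℂ)*w₀ ≠ 0 := mul_ne_zero (Complex.ofReal_ne_zero.2 hr.1.ne') hw0ne
    exact (hasSum_cubic_of_lt_one hlt hne).tsum_eq
  have hcos_lt : Real.cos s < 1 := by
    have := Real.cos_lt_cos_of_nonneg_of_le_pi (le_refl 0) hsπ.le hs0
    simpa using this
  have hcos_gt : -1 < Real.cos s := by
    have := Real.cos_lt_cos_of_nonneg_of_le_pi hs0.le (le_refl Real.pi) hsπ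
    simpa using this
  have hre1 : (1 + w₀) ∈ Complex.slitPlane := by
    rw [Complex.mem_slitPlane_iff]
    left
    rw [Complex.add_re, Complex.one_re, hw₀, Complex.exp_ofReal_mul_I_re]
    linarith
  have hre2 : (1 - w₀) ∈ Complex.slitPlane := by
    rw [Complex.mem_slitPlane_iff]
    left
    rw [Complex.sub_re, Complex.one_re, hw₀, Complex.exp_ofReal_mul_I_re]
    linarith
  have c1 : ContinuousAt (fun w : ℂ => Complex.log (1+w)) w₀ :=
    (continuousAt_clog hre1).comp (continuousAt_const.add continuousAt_id)
  have c2 : ContinuousAt (fun w : ℂ => Complex.log (1-w)) w₀ :=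
    (continuousAt_clog hre2).comp (continuousAt_const.sub continuousAt_id)
  have cinv : ContinuousAt (fun w : ℂ => w⁻¹) w₀ := continuousAt_inv₀ hw0ne
  have hFc : ContinuousAt Fcf w₀ := by
    unfold Fcf
    exact ((((c1.sub c2).div_const 2).mul ((continuousAt_id.sub cinv).pow 2)).sub
      (continuousAt_id.add cinv)).div_const 8
  have hC : Filter.Tendsto (fun r : ℝ => Fcf ((r:ℂ)*w₀)) (nhdsWithin 1 (Set.Iio 1))
      (nhds (Fcf w₀)) := by
    have hm : Filter.Tendsto (fun r : ℝ => (r:ℂ)*w₀) (nhdsWithin 1 (Set.Iio 1)) (nhds w₀) := by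
      have hcont : Continuous (fun r : ℝ => (r:ℂ)*w₀) :=
        Complex.continuous_ofReal.mul continuous_const
      have h : Filter.Tendsto (fun r : ℝ => (r:ℂ)*w₀) (nhdsWithin 1 (Set.Iio 1)) (nhds (((1:ℝ):ℂ)*w₀)) :=
        (hcont.continuousAt (x := 1)).tendsto.mono_left nhdsWithin_le_nhds
      simpa using h
    exact hFc.tendsto.comp hm
  have hA' : Filter.Tendsto (fun r => ∑' n, f r n) (nhdsWithin 1 (Set.Iio 1))
      (nhds (Fcf w₀)) := hC.congr' (hB.mono fun r hr => hr.symm)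
  have hkey : (∑' n, g n) = Fcf w₀ := tendsto_nhds_unique hA hA'
  rw [← hkey]
  exact hg_sum.hasSum



/-- For `k` odd and `s ∈ (0, π)`,
`∑_{n≥0} e^{i2ns}/((2n−k−2)(2n−k)(2n−k+2)) = χ_{(−∞,−1]}(k)/(k(4−k²))
 − e^{iks}[∑_{n=0}^{(|k|−1)/2} e^{−i·sgn(k)(2n+1)s}/((2n−1)(2n+1)(2n+3))
 + (1/4)cos s + (iπ/8)sin² s + (1/4)sin² s·ln(cot(s/2))]`. -/
theorem tsum_nat_exp_shifted_cubic (k : ℤ) (hk : Odd k) (s : ℝ) (hs : s ∈ Set.Ioo 0 Real.pi) :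
    (∑' n : ℕ, Complex.exp (Complex.I * 2 * (n : ℂ) * (s : ℂ))
        / ((2 * (n : ℂ) - (k : ℂ) - 2) * (2 * (n : ℂ) - (k : ℂ))
          * (2 * (n : ℂ) - (k : ℂ) + 2)))
      = (if k ≤ -1 then (1 : ℂ) else 0) / ((k : ℂ) * (4 - (k : ℂ) ^ 2))
        - Complex.exp (Complex.I * (k : ℂ) * (s : ℂ)) *
          ((∑ n ∈ Finset.range ((k.natAbs - 1) / 2 + 1),
              Complex.exp (-Complex.I * (k.sign : ℂ) * (2 * (n : ℂ) + 1) * (s : ℂ))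
                / ((2 * (n : ℂ) - 1) * (2 * (n : ℂ) + 1) * (2 * (n : ℂ) + 3)))
            + (1 / 4 : ℂ) * (Real.cos s : ℂ)
            + Complex.I * (Real.pi : ℂ) / 8 * (Real.sin s : ℂ) ^ 2
            + (1 / 4 : ℂ) * (Real.sin s : ℂ) ^ 2 * (Real.log (Real.cot (s / 2)) : ℂ)) := by
  obtain ⟨j, hj⟩ := hk
  set a : ℕ → ℂ := fun n => Complex.exp (Complex.I * 2 * (n : ℂ) * (s : ℂ))
        / ((2 * (n : ℂ) - (k : ℂ) - 2) * (2 * (n : ℂ) - (k : ℂ))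
          * (2 * (n : ℂ) - (k : ℂ) + 2)) with ha
  set st : ℕ → ℂ := fun n => Complex.exp ((2*(n:ℂ)+1) * ((s:ℂ)*Complex.I))
      / ((2*(n:ℂ)-1) * (2*(n:ℂ)+1) * (2*(n:ℂ)+3)) with hst
  set C : ℂ := (1 / 4 : ℂ) * (Real.cos s : ℂ)
            + Complex.I * (Real.pi : ℂ) / 8 * (Real.sin s : ℂ) ^ 2
            + (1 / 4 : ℂ) * (Real.sin s : ℂ) ^ 2 * (Real.log (Real.cot (s / 2)) : ℂ) with hCdef
  have hS : HasSum st (-C) := by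
    have h0 := hasSum_S hs
    have hfun : (fun n : ℕ => Complex.exp ((s:ℂ)*Complex.I) ^ (2*n+1)
        / ((2*(n:ℂ)-1) * (2*(n:ℂ)+1) * (2*(n:ℂ)+3))) = st := by
      funext n
      rw [hst]
      simp only
      congr 1
      rw [← Complex.exp_nat_mul]
      congr 1
      push_cast
      ring
    rw [hfun, Fcf_val hs] at h0
    exact h0
  rcases le_or_gt k (-1) with hk1 | hk1
  · -- k ≤ -1, k = -(2m+1)
    obtain ⟨m, hm⟩ : ∃ m : ℕ, k = -(2*(m:ℤ)+1) := ⟨(-j-1).toNat, by omega⟩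
    have hck : (k:ℂ) = -(2*(m:ℂ)+1) := by
      rw [hm]; push_cast; ring
    have hna : (k.natAbs - 1)/2 + 1 = m + 1 := by omega
    have hsign : (k.sign : ℂ) = -1 := by
      have h1 : k.sign = -1 := by
        have h2 : (0:ℤ) < -k := by omega
        have h3 := Int.sign_eq_one_iff_pos.mpr h2
        have h4 : (-k).sign = -k.sign := Int.sign_neg k
        omega
      rw [h1]; push_cast; ring
    have hE : Complex.exp (Complex.I * (k:ℂ) * (s:ℂ)) ≠ 0 := Complex.exp_ne_zero _
    have haeq : ∀ n : ℕ, a n = Complex.exp (Complex.I * (k:ℂ) * (s:ℂ)) * st (n + m) := by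
      intro n
      rw [ha, hst]
      simp only
      rw [mul_div_assoc']
      congr 1
      · rw [← Complex.exp_add]
        congr 1
        push_cast
        rw [hck]
        ring
      · push_cast
        rw [hck]
        ring
    have hsum : ∑' n, a n = Complex.exp (Complex.I * (k:ℂ) * (s:ℂ)) * (∑' n, st (n + m)) := by
      rw [funext haeq, tsum_mul_left]
    have hshift : (∑ i ∈ Finset.range m, st i) + ∑' n, st (n + m) = ∑' n, st n :=
      Summable.sum_add_tsum_nat_add m hS.summable
    have htail : ∑' n, st (n + m) = -C - ∑ i ∈ Finset.range m, st i := by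
      rw [← hS.tsum_eq] at *
      linear_combination hshift
    have hchi : (1:ℂ) / ((k:ℂ) * (4 - (k:ℂ)^2))
        = Complex.exp (Complex.I * (k:ℂ) * (s:ℂ)) * st m := by
      rw [hst]
      simp only
      rw [mul_div_assoc']
      have hexp1 : Complex.exp (Complex.I * (k:ℂ) * (s:ℂ))
          * Complex.exp ((2*(m:ℂ)+1) * ((s:ℂ)*Complex.I)) = 1 := by
        have hz : Complex.I * (k:ℂ) * (s:ℂ) + (2*(m:ℂ)+1) * ((s:ℂ)*Complex.I) = 0 := by
          rw [hck]; ring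
        rw [← Complex.exp_add, hz, Complex.exp_zero]
      rw [hexp1]
      congr 1
      rw [hck]
      ring
    have hb : ∀ n ∈ Finset.range (m+1),
        Complex.exp (-Complex.I * (-1:ℂ) * (2 * (n : ℂ) + 1) * (s : ℂ))
          / ((2 * (n : ℂ) - 1) * (2 * (n : ℂ) + 1) * (2 * (n : ℂ) + 3)) = st n := by
      intro n _
      rw [hst]
      simp only
      congr 2
      ring
    rw [if_pos hk1, hna, hsign, hsum, htail, Finset.sum_congr rfl hb, hchi,
      Finset.sum_range_succ]
    ring
  · -- k ≥ 1, k = 2m+1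
    obtain ⟨m, hm⟩ : ∃ m : ℕ, k = 2*(m:ℤ)+1 := ⟨j.toNat, by omega⟩
    have hck : (k:ℂ) = 2*(m:ℂ)+1 := by
      rw [hm]; push_cast; ring
    have hna : (k.natAbs - 1)/2 + 1 = m + 1 := by omega
    have hsign : (k.sign : ℂ) = 1 := by
      have h1 : k.sign = 1 := Int.sign_eq_one_iff_pos.mpr (by omega)
      rw [h1]; push_cast; ring
    have hE : Complex.exp (Complex.I * (k:ℂ) * (s:ℂ)) ≠ 0 := Complex.exp_ne_zero _
    have P1 : ∀ n : ℕ, a (n + (m+1)) = Complex.exp (Complex.I * (k:ℂ) * (s:ℂ)) * st n := by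
      intro n
      rw [ha, hst]
      simp only
      rw [mul_div_assoc']
      congr 1
      · rw [← Complex.exp_add]
        congr 1
        push_cast
        rw [hck]
        ring
      · push_cast
        rw [hck]
        ring
    have hsummable : Summable a :=
      Summable.comp_nat_add (k := m+1)
        (((hS.summable.mul_left (Complex.exp (Complex.I * (k:ℂ) * (s:ℂ)))).congr
          (fun n => (P1 n).symm)))
    have hsplit : (∑ i ∈ Finset.range (m+1), a i) + ∑' i, a (i + (m+1)) = ∑' i, a i :=
      Summable.sum_add_tsum_nat_add (m+1) hsummable
    have htail : ∑' i, a (i + (m+1))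
        = Complex.exp (Complex.I * (k:ℂ) * (s:ℂ)) * (-C) := by
      rw [funext P1, tsum_mul_left, hS.tsum_eq]
    have hhead : (∑ i ∈ Finset.range (m+1), a i)
        = -(Complex.exp (Complex.I * (k:ℂ) * (s:ℂ)) *
            ∑ n ∈ Finset.range (m+1),
              Complex.exp (-Complex.I * (1:ℂ) * (2 * (n : ℂ) + 1) * (s : ℂ))
                / ((2 * (n : ℂ) - 1) * (2 * (n : ℂ) + 1) * (2 * (n : ℂ) + 3))) := by
      rw [← Finset.sum_range_reflect, Finset.mul_sum, ← Finset.sum_neg_distrib]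
      apply Finset.sum_congr rfl
      intro i hi
      have hi' : i ≤ m := by
        have := Finset.mem_range.mp hi; omega
      have hcast : (((m + 1 - 1 - i : ℕ)) : ℂ) = (m:ℂ) - i := by
        have : m + 1 - 1 - i = m - i := by omega
        rw [this, Nat.cast_sub hi']
      rw [ha]
      simp only
      rw [hcast]
      have hexp : Complex.exp (Complex.I * (k:ℂ) * (s:ℂ))
          * Complex.exp (-Complex.I * (1:ℂ) * (2 * (i : ℂ) + 1) * (s : ℂ))
          = Complex.exp (Complex.I * 2 * ((m:ℂ) - i) * (s:ℂ)) := by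
        rw [← Complex.exp_add]
        congr 1
        rw [hck]
        ring
      have hden : (2 * ((m:ℂ) - i) - (k : ℂ) - 2) * (2 * ((m:ℂ) - i) - (k : ℂ))
          * (2 * ((m:ℂ) - i) - (k : ℂ) + 2)
          = -((2 * (i : ℂ) - 1) * (2 * (i : ℂ) + 1) * (2 * (i : ℂ) + 3)) := by
        rw [hck]; ring
      rw [hden, ← hexp, div_neg, mul_div_assoc]
    have hif : ¬ (k ≤ -1) := by omega
    rw [if_neg hif, hna, hsign, ← hsplit, hhead, htail]
    ring
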